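/- For every X ∈ F, underline-f(X) ≥ −n · √(N(X)), where underline-f(X̂) := min{⟨∇f(X̂) | Y − X̂⟩ : Y ∈ F}. -/

import Mathlib

set_option autoImplicit false

open Matrix Set Filter

attribute [local instance] Matrix.normedAddCommGroup Matrix.normedSpace

namespace BoxSDP

open scoped Classical

/-- Trace inner product `⟨A|B⟩ = Trace(Aᵀ B)`. -/
noncomputable def mip {m k : Type*} [Fintype m] [Fintype k]
    (A B : Matrix m k ℝ) : ℝ :=
  (Aᵀ * B).trace

/-- Frobenius norm `‖A‖_F = √⟨A|A⟩`. -/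
noncomputable def fnorm {m k : Type*} [Fintype m] [Fintype k]
    (A : Matrix m k ℝ) : ℝ :=
  Real.sqrt (mip A A)

/-- The feasible set `F = {X : O ⪯ X ⪯ I}` (membership forces symmetry). -/
def Feas (n : ℕ) : Set (Matrix (Fin n) (Fin n) ℝ) :=
  {X | X.PosSemidef ∧ (1 - X).PosSemidef}

/-- Square root of a positive semidefinite matrix (junk value `0` otherwise);
agrees with `A^{1/2} = Q K^{1/2} Qᵀ` on positive semidefinite matrices. -/
noncomputable def psqrt {m : Type*} [Fintype m] [DecidableEq m]
    (A : Matrix m m ℝ) : Matrix m m ℝ :=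
  if h : A.PosSemidef then
    (h.1.eigenvectorUnitary : Matrix m m ℝ) * Matrix.diagonal ((↑) ∘ (√·) ∘ h.1.eigenvalues) *
      (star h.1.eigenvectorUnitary : Matrix m m ℝ)
  else 0

/-- Fourth root `A^{1/4}` of a positive semidefinite matrix. -/
noncomputable def proot4 {m : Type*} [Fintype m] [DecidableEq m]
    (A : Matrix m m ℝ) : Matrix m m ℝ :=
  psqrt (psqrt A)

/-- The 2-norm of a symmetric matrix: its largest absolute eigenvalue. -/
noncomputable def norm2 {m : Type*} [Fintype m] [DecidableEq m]
    (A : Matrix m m ℝ) : ℝ :=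
  if h : A.IsHermitian then sSup (Set.range fun i => |h.eigenvalues i|) else 0

/-- The linear functional `H ↦ ⟨G|H⟩`, as a continuous linear map; a function
`f` has gradient matrix `G` at `X` iff `HasFDerivAt f (gradCLM G) X`. -/
noncomputable def gradCLM {n : ℕ} (G : Matrix (Fin n) (Fin n) ℝ) :
    Matrix (Fin n) (Fin n) ℝ →L[ℝ] ℝ :=
  LinearMap.toContinuousLinearMap
    { toFun := fun H => mip G H
      map_add' := fun x y => by
        simp [mip, Matrix.mul_add]
      map_smul' := fun c x => by
        simp [mip, Matrix.mul_smul] }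

/-- The Hessian bilinear form `⟨A | ∇²f(X) | B⟩` induced by the derivative
`hessOp` of the gradient map. -/
noncomputable def hform {n : ℕ}
    (hessOp : Matrix (Fin n) (Fin n) ℝ →L[ℝ] Matrix (Fin n) (Fin n) ℝ)
    (A B : Matrix (Fin n) (Fin n) ℝ) : ℝ :=
  mip A (hessOp B)

/-- `underline-f`: the minimum of `⟨G | Y − X̂⟩` over `Y ∈ F`. -/
noncomputable def underf {n : ℕ} (G Xh : Matrix (Fin n) (Fin n) ℝ) : ℝ :=
  sInf ((fun Y => mip G (Y - Xh)) '' Feas n)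

/-- First-order optimality condition at `Xs` for gradient matrix `G`. -/
def FirstOrderOpt {n : ℕ} (G Xs : Matrix (Fin n) (Fin n) ℝ) : Prop :=
  ∀ X ∈ Feas n, 0 ≤ mip G (X - Xs)

/-- A fixed eigenvalue decomposition `G = P Γ Pᵀ` of a symmetric matrix `G`,
with eigenvalues in descending order, split into the block `Pp, gp` of
positive eigenvalues and the block `Pm, gm` of nonpositive eigenvalues. -/
structure SpecDecomp (n : ℕ) (G : Matrix (Fin n) (Fin n) ℝ) where
  np : ℕ
  nm : ℕ
  hdim : np + nm = n
  Pp : Matrix (Fin n) (Fin np) ℝ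
  Pm : Matrix (Fin n) (Fin nm) ℝ
  gp : Fin np → ℝ
  gm : Fin nm → ℝ
  hgp_pos : ∀ i, 0 < gp i
  hgm_nonpos : ∀ j, gm j ≤ 0
  hgp_anti : ∀ i j : Fin np, i ≤ j → gp j ≤ gp i
  hgm_anti : ∀ i j : Fin nm, i ≤ j → gm j ≤ gm i
  hPp_orth : Ppᵀ * Pp = 1
  hPm_orth : Pmᵀ * Pm = 1
  hPpPm : Ppᵀ * Pm = 0
  hPPT : Pp * Ppᵀ + Pm * Pmᵀ = 1
  hG : G = Pp * Matrix.diagonal gp * Ppᵀ + Pm * Matrix.diagonal gm * Pmᵀ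

namespace SpecDecomp

variable {n : ℕ} {G : Matrix (Fin n) (Fin n) ℝ}

/-- `V₊(X) = P₊ᵀ X P₊`. -/
def Vp (sd : SpecDecomp n G) (X : Matrix (Fin n) (Fin n) ℝ) :
    Matrix (Fin sd.np) (Fin sd.np) ℝ :=
  sd.Ppᵀ * X * sd.Pp

/-- `V₋(X) = P₋ᵀ (I − X) P₋`. -/
def Vm (sd : SpecDecomp n G) (X : Matrix (Fin n) (Fin n) ℝ) :
    Matrix (Fin sd.nm) (Fin sd.nm) ℝ :=
  sd.Pmᵀ * (1 - X) * sd.Pm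

/-- The search direction `D(X) = P M Pᵀ` with blocks
`M₁₁ = V₊^{1/2} Γ₊ V₊^{1/2}`, `M₁₂ = γ_max P₊ᵀ X P₋`,
`M₂₁ = γ_max P₋ᵀ X P₊`, `M₂₂ = V₋^{1/2} Γ₋ V₋^{1/2}`. -/
noncomputable def Dmat (sd : SpecDecomp n G) (X : Matrix (Fin n) (Fin n) ℝ) :
    Matrix (Fin n) (Fin n) ℝ :=
  sd.Pp * (psqrt (sd.Vp X) * Matrix.diagonal sd.gp * psqrt (sd.Vp X)) * sd.Ppᵀ
    + norm2 G • (sd.Pp * (sd.Ppᵀ * X * sd.Pm) * sd.Pmᵀ)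
    + norm2 G • (sd.Pm * (sd.Pmᵀ * X * sd.Pp) * sd.Ppᵀ)
    + sd.Pm * (psqrt (sd.Vm X) * Matrix.diagonal sd.gm * psqrt (sd.Vm X)) * sd.Pmᵀ

/-- `N(X) = ⟨G | D(X)⟩`. -/
noncomputable def Nval (sd : SpecDecomp n G) (X : Matrix (Fin n) (Fin n) ℝ) : ℝ :=
  mip G (sd.Dmat X)

end SpecDecomp

/-!
In the eigenbasis of `G`, every `Y ∈ F` has diagonal blocks between `O` and `I`, so
`⟨G | Y − X⟩ ≥ tr(Γ₋ V₋) − tr(Γ₊ V₊)`. Only the diagonal blocks of `D(X)` see `G`, so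
`N(X) = tr(Γ₊ S₊ Γ₊ S₊) + tr(Γ₋ S₋ Γ₋ S₋)` with `S± = V±^{1/2}`. For each block,
Cauchy–Schwarz for the trace inner product, applied to `S^{1/2} Γ S^{1/2}` and `S`, gives
`tr(Γ V) ≤ √(tr V) · √(tr(Γ S Γ S))`, and `tr V ≤ k` since `O ⪯ V ⪯ I` is `k × k`.
-/

section PosSemidef

variable {m : Type*} [Fintype m] [DecidableEq m]

lemma psqrt_posSemidef {A : Matrix m m ℝ} (h : A.PosSemidef) : (psqrt A).PosSemidef := by
  rw [psqrt, dif_pos h]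
  have hD : (diagonal ((↑) ∘ (√·) ∘ h.1.eigenvalues) : Matrix m m ℝ).PosSemidef := by
    rw [posSemidef_diagonal_iff]
    intro i
    simp [Real.sqrt_nonneg]
  simpa [star_eq_conjTranspose] using
    hD.mul_mul_conjTranspose_same (h.1.eigenvectorUnitary : Matrix m m ℝ)

lemma psqrt_mul_self {A : Matrix m m ℝ} (h : A.PosSemidef) : psqrt A * psqrt A = A := by
  rw [psqrt, dif_pos h]
  have hU : (star h.1.eigenvectorUnitary : Matrix m m ℝ) *
      (h.1.eigenvectorUnitary : Matrix m m ℝ) = 1 :=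
    Unitary.coe_star_mul_self _
  have hassoc : ∀ U D S : Matrix m m ℝ, U * D * S * (U * D * S) = U * (D * (S * U) * D) * S := by
    intro U D S
    simp only [Matrix.mul_assoc]
  rw [hassoc, hU, Matrix.mul_one, diagonal_mul_diagonal]
  conv_rhs => rw [h.1.spectral_theorem]
  rw [Unitary.conjStarAlgAut_apply]
  congr 3
  funext i
  simp [Real.mul_self_sqrt (h.eigenvalues_nonneg i)]

lemma psqrt_transpose {A : Matrix m m ℝ} (h : A.PosSemidef) : (psqrt A)ᵀ = psqrt A := by
  simpa [IsHermitian, conjTranspose_eq_transpose_of_trivial] using (psqrt_posSemidef h).1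

omit [DecidableEq m] in
lemma _root_.Matrix.PosSemidef.transpose_mul_mul_same {k : Type*} [Fintype k] {X : Matrix m m ℝ}
    (h : X.PosSemidef) (B : Matrix m k ℝ) : (Bᵀ * X * B).PosSemidef := by
  simpa [conjTranspose_eq_transpose_of_trivial] using h.conjTranspose_mul_mul_same B

omit [Fintype m] in
lemma diag_le_one_of_posSemidef_one_sub {V : Matrix m m ℝ} (h : (1 - V).PosSemidef) (i : m) :
    V i i ≤ 1 := by
  simpa using h.diag_nonneg (i := i)

lemma trace_le_card_of_posSemidef_one_sub {V : Matrix m m ℝ} (h : (1 - V).PosSemidef) :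
    V.trace ≤ Fintype.card m := by
  calc V.trace ≤ ∑ _i : m, (1 : ℝ) :=
        Finset.sum_le_sum fun i _ => diag_le_one_of_posSemidef_one_sub h i
    _ = Fintype.card m := by simp

end PosSemidef

section Trace

variable {m k : Type*} [Fintype m] [Fintype k]

lemma mip_eq_sum (A B : Matrix m k ℝ) : mip A B = ∑ p : m × k, A p.1 p.2 * B p.1 p.2 := by
  rw [mip, trace, Fintype.sum_prod_type_right]
  simp [mul_apply, diag]

lemma mip_self_nonneg (A : Matrix m k ℝ) : 0 ≤ mip A A := by
  rw [mip_eq_sum]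
  exact Finset.sum_nonneg fun p _ => mul_self_nonneg _

lemma mip_le_sqrt_mul_sqrt (A B : Matrix m k ℝ) : mip A B ≤ √(mip A A) * √(mip B B) := by
  simp only [mip_eq_sum]
  simpa [sq] using Real.sum_mul_le_sqrt_mul_sqrt Finset.univ
    (fun p : m × k => A p.1 p.2) (fun p : m × k => B p.1 p.2)

lemma mip_sub_right (A B C : Matrix m k ℝ) : mip A (B - C) = mip A B - mip A C := by
  simp only [mip, Matrix.mul_sub, trace_sub]

lemma mip_conj_left_eq {R Γ : Matrix m m ℝ} (hR : Rᵀ = R) (hΓ : Γᵀ = Γ) (B : Matrix m m ℝ) :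
    mip (R * Γ * R) B = (Γ * (R * B * R)).trace := by
  rw [mip, transpose_mul, transpose_mul, hR, hΓ, Matrix.mul_assoc, trace_mul_comm]
  simp only [Matrix.mul_assoc]

lemma trace_mul_mul_transpose_mul {n : Type*} [Fintype n] (P : Matrix n k ℝ)
    (D : Matrix k k ℝ) (Y : Matrix n n ℝ) :
    (P * D * Pᵀ * Y).trace = (D * (Pᵀ * Y * P)).trace := by
  rw [Matrix.mul_assoc, Matrix.mul_assoc, trace_mul_comm]
  simp only [Matrix.mul_assoc]

lemma trace_diagonal_mul [DecidableEq m] (g : m → ℝ) (W : Matrix m m ℝ) :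
    (diagonal g * W).trace = ∑ i, g i * W i i := by
  simp [trace, diagonal_mul]

omit [Fintype k] in
lemma one_sub_transpose_mul_mul [DecidableEq m] [DecidableEq k] {P : Matrix m k ℝ}
    {X : Matrix m m ℝ} (hP : Pᵀ * P = 1) : 1 - Pᵀ * X * P = Pᵀ * (1 - X) * P := by
  rw [Matrix.mul_sub, Matrix.mul_one, Matrix.sub_mul, hP]

end Trace

section FourthRoot

variable {m : Type*} [Fintype m] [DecidableEq m] {V Γ : Matrix m m ℝ}

lemma proot4_transpose (hV : V.PosSemidef) : (proot4 V)ᵀ = proot4 V :=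
  psqrt_transpose (psqrt_posSemidef hV)

lemma proot4_mul_self (hV : V.PosSemidef) : proot4 V * proot4 V = psqrt V :=
  psqrt_mul_self (psqrt_posSemidef hV)

lemma trace_mul_psqrt_mul_psqrt_eq_mip (hV : V.PosSemidef) (hΓ : Γᵀ = Γ) :
    (Γ * (psqrt V * Γ * psqrt V)).trace =
      mip (proot4 V * Γ * proot4 V) (proot4 V * Γ * proot4 V) := by
  rw [mip_conj_left_eq (proot4_transpose hV) hΓ, ← proot4_mul_self hV]
  simp only [Matrix.mul_assoc]

lemma trace_mul_psqrt_mul_psqrt_nonneg (hV : V.PosSemidef) (hΓ : Γᵀ = Γ) :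
    0 ≤ (Γ * (psqrt V * Γ * psqrt V)).trace := by
  rw [trace_mul_psqrt_mul_psqrt_eq_mip hV hΓ]
  exact mip_self_nonneg _

lemma trace_mul_le_sqrt_trace_mul_sqrt (hV : V.PosSemidef) (hΓ : Γᵀ = Γ) :
    (Γ * V).trace ≤ √V.trace * √(Γ * (psqrt V * Γ * psqrt V)).trace := by
  have hS : psqrt V * psqrt V = V := psqrt_mul_self hV
  have hRSR : proot4 V * psqrt V * proot4 V = V :=
    calc proot4 V * psqrt V * proot4 V = proot4 V * proot4 V * (proot4 V * proot4 V) := by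
          rw [← proot4_mul_self hV]
          simp only [Matrix.mul_assoc]
      _ = V := by rw [proot4_mul_self hV, hS]
  have hΓV : mip (proot4 V * Γ * proot4 V) (psqrt V) = (Γ * V).trace := by
    rw [mip_conj_left_eq (proot4_transpose hV) hΓ, hRSR]
  have hSS : mip (psqrt V) (psqrt V) = V.trace := by
    rw [mip, psqrt_transpose hV, hS]
  calc (Γ * V).trace ≤ √(mip (proot4 V * Γ * proot4 V) (proot4 V * Γ * proot4 V)) *
        √(mip (psqrt V) (psqrt V)) := hΓV ▸ mip_le_sqrt_mul_sqrt _ _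
    _ = √V.trace * √(Γ * (psqrt V * Γ * psqrt V)).trace := by
        rw [hSS, trace_mul_psqrt_mul_psqrt_eq_mip hV hΓ, mul_comm]

lemma trace_mul_le_card_mul_sqrt (hV : V.PosSemidef) (hV1 : (1 - V).PosSemidef)
    (hΓ : Γᵀ = Γ) :
    (Γ * V).trace ≤ Fintype.card m * √(Γ * (psqrt V * Γ * psqrt V)).trace := by
  have htr := trace_le_card_of_posSemidef_one_sub hV1
  have hsqrt : √V.trace ≤ Fintype.card m := by
    rw [Real.sqrt_le_left (Nat.cast_nonneg _)]
    have : (Fintype.card m : ℝ) ≤ (Fintype.card m : ℝ) ^ 2 := by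
      norm_cast
      exact Nat.le_self_pow two_ne_zero _
    linarith
  exact (trace_mul_le_sqrt_trace_mul_sqrt hV hΓ).trans
    (mul_le_mul_of_nonneg_right hsqrt (Real.sqrt_nonneg _))

end FourthRoot

namespace SpecDecomp

variable {n : ℕ} {G : Matrix (Fin n) (Fin n) ℝ} (sd : SpecDecomp n G)
  {X : Matrix (Fin n) (Fin n) ℝ}

lemma transpose_Pm_mul_Pp : sd.Pmᵀ * sd.Pp = 0 := by
  simpa [transpose_mul] using congrArg transpose sd.hPpPm

omit sd in
lemma transpose_eq (sd : SpecDecomp n G) : Gᵀ = G := by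
  conv_lhs => rw [sd.hG]
  conv_rhs => rw [sd.hG]
  simp [transpose_add, transpose_mul, Matrix.mul_assoc]

lemma mip_eq (Y : Matrix (Fin n) (Fin n) ℝ) :
    mip G Y = (diagonal sd.gp * (sd.Ppᵀ * Y * sd.Pp)).trace
      + (diagonal sd.gm * (sd.Pmᵀ * Y * sd.Pm)).trace := by
  rw [mip, sd.transpose_eq]
  conv_lhs => rw [sd.hG]
  rw [Matrix.add_mul, trace_add, trace_mul_mul_transpose_mul, trace_mul_mul_transpose_mul]

lemma transpose_Pp_mul_Dmat_mul_Pp :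
    sd.Ppᵀ * sd.Dmat X * sd.Pp = psqrt (sd.Vp X) * diagonal sd.gp * psqrt (sd.Vp X) := by
  have hPp (B : Matrix (Fin sd.np) (Fin sd.np) ℝ) : sd.Ppᵀ * (sd.Pp * B) = B := by
    rw [← Matrix.mul_assoc, sd.hPp_orth, Matrix.one_mul]
  have hPm (B : Matrix (Fin sd.nm) (Fin sd.np) ℝ) : sd.Ppᵀ * (sd.Pm * B) = 0 := by
    rw [← Matrix.mul_assoc, sd.hPpPm, Matrix.zero_mul]
  simp only [Dmat, Matrix.mul_add, Matrix.add_mul, Matrix.mul_smul, Matrix.smul_mul,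
    Matrix.mul_assoc, hPp, hPm, sd.transpose_Pm_mul_Pp, sd.hPp_orth, Matrix.mul_one,
    Matrix.mul_zero, smul_zero, add_zero]

lemma transpose_Pm_mul_Dmat_mul_Pm :
    sd.Pmᵀ * sd.Dmat X * sd.Pm = psqrt (sd.Vm X) * diagonal sd.gm * psqrt (sd.Vm X) := by
  have hPm (B : Matrix (Fin sd.nm) (Fin sd.nm) ℝ) : sd.Pmᵀ * (sd.Pm * B) = B := by
    rw [← Matrix.mul_assoc, sd.hPm_orth, Matrix.one_mul]
  have hPp (B : Matrix (Fin sd.np) (Fin sd.nm) ℝ) : sd.Pmᵀ * (sd.Pp * B) = 0 := by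
    rw [← Matrix.mul_assoc, sd.transpose_Pm_mul_Pp, Matrix.zero_mul]
  simp only [Dmat, Matrix.mul_add, Matrix.add_mul, Matrix.mul_smul, Matrix.smul_mul,
    Matrix.mul_assoc, hPp, hPm, sd.hPpPm, sd.hPm_orth, Matrix.mul_one,
    Matrix.mul_zero, smul_zero, zero_add]

noncomputable def Nplus (X : Matrix (Fin n) (Fin n) ℝ) : ℝ :=
  (diagonal sd.gp * (psqrt (sd.Vp X) * diagonal sd.gp * psqrt (sd.Vp X))).trace

noncomputable def Nminus (X : Matrix (Fin n) (Fin n) ℝ) : ℝ :=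
  (diagonal sd.gm * (psqrt (sd.Vm X) * diagonal sd.gm * psqrt (sd.Vm X))).trace

lemma Nval_eq_Nplus_add_Nminus : sd.Nval X = sd.Nplus X + sd.Nminus X := by
  rw [Nval, mip_eq, transpose_Pp_mul_Dmat_mul_Pp, transpose_Pm_mul_Dmat_mul_Pm, Nplus, Nminus]

lemma Vp_posSemidef (hX : X.PosSemidef) : (sd.Vp X).PosSemidef :=
  hX.transpose_mul_mul_same sd.Pp

lemma one_sub_Vp_posSemidef (hX : (1 - X).PosSemidef) : (1 - sd.Vp X).PosSemidef := by
  rw [Vp, one_sub_transpose_mul_mul sd.hPp_orth]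
  exact hX.transpose_mul_mul_same sd.Pp

lemma Vm_posSemidef (hX : (1 - X).PosSemidef) : (sd.Vm X).PosSemidef :=
  hX.transpose_mul_mul_same sd.Pm

lemma one_sub_Vm_eq : 1 - sd.Vm X = sd.Pmᵀ * X * sd.Pm := by
  rw [Vm, ← one_sub_transpose_mul_mul sd.hPm_orth, sub_sub_cancel]

lemma one_sub_Vm_posSemidef (hX : X.PosSemidef) : (1 - sd.Vm X).PosSemidef := by
  rw [one_sub_Vm_eq]
  exact hX.transpose_mul_mul_same sd.Pm

lemma Nplus_nonneg (hX : X.PosSemidef) : 0 ≤ sd.Nplus X :=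
  trace_mul_psqrt_mul_psqrt_nonneg (sd.Vp_posSemidef hX) (diagonal_transpose _)

lemma Nminus_nonneg (hX : (1 - X).PosSemidef) : 0 ≤ sd.Nminus X :=
  trace_mul_psqrt_mul_psqrt_nonneg (sd.Vm_posSemidef hX) (diagonal_transpose _)

lemma trace_gp_mul_Vp_le (hX : X ∈ Feas n) :
    (diagonal sd.gp * sd.Vp X).trace ≤ sd.np * √(sd.Nplus X) := by
  simpa [Nplus] using trace_mul_le_card_mul_sqrt (sd.Vp_posSemidef hX.1)
    (sd.one_sub_Vp_posSemidef hX.2) (diagonal_transpose sd.gp)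

lemma neg_trace_gm_mul_Vm_le (hX : X ∈ Feas n) :
    -(diagonal sd.gm * sd.Vm X).trace ≤ sd.nm * √(sd.Nminus X) := by
  have hΓ : (-diagonal sd.gm)ᵀ = -diagonal sd.gm := by rw [transpose_neg, diagonal_transpose]
  have h := trace_mul_le_card_mul_sqrt (sd.Vm_posSemidef hX.2) (sd.one_sub_Vm_posSemidef hX.1) hΓ
  simp only [Matrix.neg_mul, Matrix.mul_neg, neg_neg, trace_neg, Fintype.card_fin] at h
  exact h

lemma sum_gm_le_mip {Y : Matrix (Fin n) (Fin n) ℝ} (hY : Y ∈ Feas n) :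
    ∑ j, sd.gm j ≤ mip G Y := by
  have hp : 0 ≤ (diagonal sd.gp * (sd.Ppᵀ * Y * sd.Pp)).trace := by
    rw [trace_diagonal_mul]
    exact Finset.sum_nonneg fun i _ =>
      mul_nonneg (sd.hgp_pos i).le ((hY.1.transpose_mul_mul_same sd.Pp).diag_nonneg)
  have hm : ∑ j, sd.gm j ≤ (diagonal sd.gm * (sd.Pmᵀ * Y * sd.Pm)).trace := by
    rw [trace_diagonal_mul]
    refine Finset.sum_le_sum fun j _ => ?_
    have hY1 := hY.2.transpose_mul_mul_same sd.Pm
    rw [← one_sub_transpose_mul_mul sd.hPm_orth] at hY1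
    simpa using mul_le_mul_of_nonpos_left (diag_le_one_of_posSemidef_one_sub hY1 j)
      (sd.hgm_nonpos j)
  rw [mip_eq]
  linarith

lemma trace_gp_mul_Vp_sub_trace_gm_mul_Vm_le (hX : X ∈ Feas n) :
    (diagonal sd.gp * sd.Vp X).trace - (diagonal sd.gm * sd.Vm X).trace
      ≤ n * √(sd.Nval X) := by
  have hN := sd.Nval_eq_Nplus_add_Nminus (X := X)
  have hNp : √(sd.Nplus X) ≤ √(sd.Nval X) :=
    Real.sqrt_le_sqrt (by linarith [sd.Nminus_nonneg hX.2])
  have hNm : √(sd.Nminus X) ≤ √(sd.Nval X) :=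
    Real.sqrt_le_sqrt (by linarith [sd.Nplus_nonneg hX.1])
  have hdim : (sd.np : ℝ) + sd.nm = n := by exact_mod_cast sd.hdim
  calc (diagonal sd.gp * sd.Vp X).trace - (diagonal sd.gm * sd.Vm X).trace
      ≤ sd.np * √(sd.Nplus X) + sd.nm * √(sd.Nminus X) := by
        linarith [sd.trace_gp_mul_Vp_le hX, sd.neg_trace_gm_mul_Vm_le hX]
    _ ≤ sd.np * √(sd.Nval X) + sd.nm * √(sd.Nval X) := by gcongr
    _ = n * √(sd.Nval X) := by rw [← add_mul, hdim]

lemma mip_eq_trace_gp_mul_Vp_add_sum_gm_sub :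
    mip G X = (diagonal sd.gp * sd.Vp X).trace
      + (∑ j, sd.gm j - (diagonal sd.gm * sd.Vm X).trace) := by
  rw [mip_eq, ← one_sub_Vm_eq, Matrix.mul_sub, Matrix.mul_one, trace_sub, trace_diagonal, Vp]

lemma trace_gm_mul_Vm_sub_trace_gp_mul_Vp_le_mip_sub {Y : Matrix (Fin n) (Fin n) ℝ}
    (hY : Y ∈ Feas n) :
    (diagonal sd.gm * sd.Vm X).trace - (diagonal sd.gp * sd.Vp X).trace ≤ mip G (Y - X) := by
  rw [mip_sub_right, sd.mip_eq_trace_gp_mul_Vp_add_sum_gm_sub (X := X)]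
  linarith [sd.sum_gm_le_mip hY]

end SpecDecomp

theorem underf_ge_neg_n_sqrt_Nval_general {n : ℕ}
    (grad : Matrix (Fin n) (Fin n) ℝ → Matrix (Fin n) (Fin n) ℝ)
    (X : Matrix (Fin n) (Fin n) ℝ) (hX : X ∈ Feas n)
    (sd : SpecDecomp n (grad X)) :
    -(n : ℝ) * Real.sqrt (sd.Nval X) ≤ underf (grad X) X := by
  refine le_csInf ⟨_, X, hX, rfl⟩ ?_
  rintro _ ⟨Y, hY, rfl⟩
  linarith [sd.trace_gm_mul_Vm_sub_trace_gp_mul_Vp_le_mip_sub (X := X) hY,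
    sd.trace_gp_mul_Vp_sub_trace_gm_mul_Vm_le hX]

theorem underf_ge_neg_n_sqrt_Nval {n : ℕ}
    (f : Matrix (Fin n) (Fin n) ℝ → ℝ)
    (grad : Matrix (Fin n) (Fin n) ℝ → Matrix (Fin n) (Fin n) ℝ)
    (hgradsym : ∀ X ∈ Feas n, (grad X).IsSymm)
    (hgrad : ∀ X ∈ Feas n, HasFDerivAt f (gradCLM (grad X)) X)
    (X : Matrix (Fin n) (Fin n) ℝ) (hX : X ∈ Feas n)
    (sd : SpecDecomp n (grad X)) :
    -(n : ℝ) * Real.sqrt (sd.Nval X) ≤ underf (grad X) X :=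
  underf_ge_neg_n_sqrt_Nval_general grad X hX sd

end BoxSDP
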